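/- arXiv:2402.18042 — 5 statements merged into one kernel-verified Lean document; each statement's English description precedes it below -/
import Mathlib

section
/- Let B be a commutative ring, π ∈ B, N ≥ 1, and 1 ≤ a ≤ N. Consider the B-algebra homomorphism φ : B[T'₀,…,T'_N] → B[T₀,…,T_N] determined by T'_{a-1} ↦ T_{a-1}·T_a and T'_r ↦ T_r for r ≠ a-1. Then φ induces an isomorphism of B-algebras between the localization (B[T'₀,…,T'_N]/(T'₀⋯T'_{a-1} − π))_{T'_a} at the image of T'_a, and the localization (B[T₀,…,T_N]/(T₀⋯T_a − π))_{T_a} at the image of T_a. -/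
set_option synthInstance.maxHeartbeats 1000000
set_option maxHeartbeats 1000000

open MvPolynomial

/-- The `B`-algebra map `φ : B[T'₀,…,T'_N] → B[T₀,…,T_N]`, `T'_{a-1} ↦ T_{a-1}·T_a`,
`T'_r ↦ T_r` (`r ≠ a-1`), induces an isomorphism
`(B[T'₀,…,T'_N]/(T'₀⋯T'_{a-1} − π))_{T'_a} ≅ (B[T₀,…,T_N]/(T₀⋯T_a − π))_{T_a}`.
(The isomorphism is in particular compatible with the structure maps from the
polynomial ring, hence is an isomorphism of `B`-algebras.) -/
theorem stmt3 (B : Type*) [CommRing B] (π : B) (N a : ℕ)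
    (hN : 1 ≤ N) (ha1 : 1 ≤ a) (haN : a ≤ N)
    (ta : Fin (N + 1)) (hta : (ta : ℕ) = a)
    (φ : MvPolynomial (Fin (N + 1)) B →ₐ[B] MvPolynomial (Fin (N + 1)) B)
    (hφ : φ = aeval (fun r : Fin (N + 1) =>
      if (r : ℕ) = a - 1 then X r * X ta else X r))
    (I₁ I₂ : Ideal (MvPolynomial (Fin (N + 1)) B))
    (hI₁ : I₁ = Ideal.span
      {(∏ i ∈ Finset.univ.filter (fun i : Fin (N + 1) => (i : ℕ) < a), X i) - C π})
    (hI₂ : I₂ = Ideal.span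
      {(∏ i ∈ Finset.univ.filter (fun i : Fin (N + 1) => (i : ℕ) ≤ a), X i) - C π}) :
    ∃ e : Localization.Away (Ideal.Quotient.mk I₁ (X ta)) ≃+*
          Localization.Away (Ideal.Quotient.mk I₂ (X ta)),
      ∀ p : MvPolynomial (Fin (N + 1)) B,
        e (algebraMap (MvPolynomial (Fin (N + 1)) B ⧸ I₁)
            (Localization.Away (Ideal.Quotient.mk I₁ (X ta))) (Ideal.Quotient.mk I₁ p)) =
        algebraMap (MvPolynomial (Fin (N + 1)) B ⧸ I₂)
            (Localization.Away (Ideal.Quotient.mk I₂ (X ta))) (Ideal.Quotient.mk I₂ (φ p)) := by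
  classical
  set f₁ : MvPolynomial (Fin (N+1)) B := (∏ i ∈ Finset.univ.filter (fun i : (Fin (N + 1)) => (i : ℕ) < a), X i) - C π with hf₁
  set f₂ : MvPolynomial (Fin (N+1)) B := (∏ i ∈ Finset.univ.filter (fun i : (Fin (N + 1)) => (i : ℕ) ≤ a), X i) - C π with hf₂
  set S₁ : Finset (Fin (N + 1)) := Finset.univ.filter (fun i : (Fin (N + 1)) => (i : ℕ) < a) with hS₁
  set p : (Fin (N + 1)) := ⟨a - 1, by omega⟩ with hp
  have hcond : ∀ i : (Fin (N + 1)), ((i : ℕ) = a - 1) ↔ i = p := by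
    intro i
    constructor
    · intro h; exact Fin.ext h
    · intro h; subst h; rfl
  have htap : ta ≠ p := by
    intro h
    have : (ta : ℕ) = a - 1 := by rw [h]
    omega
  have hpS₁ : p ∈ S₁ := by
    simp only [hS₁, Finset.mem_filter, Finset.mem_univ, true_and]
    show a - 1 < a; omega
  have htaS₁ : ta ∉ S₁ := by
    simp only [hS₁, Finset.mem_filter, Finset.mem_univ, true_and, hta]
    omega
  have hfilter : Finset.univ.filter (fun i : (Fin (N + 1)) => (i : ℕ) ≤ a) = insert ta S₁ := by
    ext i
    simp only [hS₁, Finset.mem_filter, Finset.mem_univ, true_and, Finset.mem_insert]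
    constructor
    · intro h
      rcases eq_or_lt_of_le h with h | h
      · left; exact Fin.ext (by omega)
      · right; exact h
    · rintro (h | h)
      · subst h; omega
      · omega
  have hφX : ∀ i : (Fin (N + 1)), φ (X i) = if i = p then X i * X ta else X i := by
    intro i
    rw [hφ, aeval_X]
    by_cases h : i = p
    · rw [if_pos ((hcond i).mpr h), if_pos h]
    · rw [if_neg (fun hc => h ((hcond i).mp hc)), if_neg h]
  have hφta : φ (X ta) = X ta := by rw [hφX, if_neg htap]
  have hφC : ∀ b : B, φ (C b) = C b := by
    intro b; rw [hφ, aeval_C, algebraMap_eq]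
  have hφf₁ : φ f₁ = f₂ := by
    rw [hf₁, hf₂, map_sub]
    congr 1
    · rw [map_prod]
      have step : ∀ i ∈ S₁, φ (X i) = X i * (if i = p then X ta else 1) := by
        intro i _
        rw [hφX]
        by_cases h : i = p
        · rw [if_pos h, if_pos h]
        · rw [if_neg h, if_neg h, mul_one]
      rw [Finset.prod_congr rfl step, Finset.prod_mul_distrib,
        Finset.prod_ite_eq' S₁ p (fun _ => X ta), if_pos hpS₁, hfilter,
        Finset.prod_insert htaS₁, mul_comm]
    · exact hφC π
  have hle : I₁ ≤ Ideal.comap (φ : MvPolynomial (Fin (N + 1)) B →+* MvPolynomial (Fin (N + 1)) B) I₂ := by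
    rw [hI₁, Ideal.span_le, Set.singleton_subset_iff]
    refine Ideal.mem_comap.mpr ?_
    show φ f₁ ∈ I₂
    rw [hφf₁, hI₂]
    exact Ideal.subset_span rfl
  set q₁ := Ideal.Quotient.mk I₁ with hq₁
  set q₂ := Ideal.Quotient.mk I₂ with hq₂
  set φb : (MvPolynomial (Fin (N + 1)) B ⧸ I₁) →+* (MvPolynomial (Fin (N + 1)) B ⧸ I₂) := Ideal.quotientMap I₂ (φ : MvPolynomial (Fin (N + 1)) B →+* MvPolynomial (Fin (N + 1)) B) hle with hφb
  have hφbmk : ∀ r : MvPolynomial (Fin (N + 1)) B, φb (q₁ r) = q₂ (φ r) := fun r => Ideal.quotientMap_mk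
  set g : (MvPolynomial (Fin (N + 1)) B ⧸ I₁) →+* (Localization.Away (q₂ (X ta))) := (algebraMap (MvPolynomial (Fin (N + 1)) B ⧸ I₂) (Localization.Away (q₂ (X ta)))).comp φb with hg
  have hu₂ : IsUnit (algebraMap (MvPolynomial (Fin (N + 1)) B ⧸ I₂) (Localization.Away (q₂ (X ta))) (q₂ (X ta))) :=
    IsLocalization.Away.algebraMap_isUnit (S := (Localization.Away (q₂ (X ta)))) (q₂ (X ta))
  have hgt : g (q₁ (X ta)) = algebraMap (MvPolynomial (Fin (N + 1)) B ⧸ I₂) (Localization.Away (q₂ (X ta))) (q₂ (X ta)) := by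
    rw [hg, RingHom.comp_apply, hφbmk, hφta]
  have hunit : IsUnit (g (q₁ (X ta))) := hgt ▸ hu₂
  set F : (Localization.Away (q₁ (X ta))) →+* (Localization.Away (q₂ (X ta))) := IsLocalization.Away.lift (S := (Localization.Away (q₁ (X ta)))) (g := g) (q₁ (X ta)) hunit with hF
  have hFe : ∀ r : MvPolynomial (Fin (N + 1)) B, F (algebraMap (MvPolynomial (Fin (N + 1)) B ⧸ I₁) (Localization.Away (q₁ (X ta))) (q₁ r)) = algebraMap (MvPolynomial (Fin (N + 1)) B ⧸ I₂) (Localization.Away (q₂ (X ta))) (q₂ (φ r)) := by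
    intro r
    rw [hF, IsLocalization.Away.lift_eq, hg, RingHom.comp_apply, hφbmk]
  -- inverse map
  set u : (Localization.Away (q₁ (X ta)))ˣ := (IsLocalization.Away.algebraMap_isUnit (S := (Localization.Away (q₁ (X ta)))) (q₁ (X ta))).unit with hu
  have huval : (u : (Localization.Away (q₁ (X ta)))) = algebraMap (MvPolynomial (Fin (N + 1)) B ⧸ I₁) (Localization.Away (q₁ (X ta))) (q₁ (X ta)) := rfl
  set c : (Fin (N + 1)) → (Localization.Away (q₁ (X ta))) := fun i => algebraMap (MvPolynomial (Fin (N + 1)) B ⧸ I₁) (Localization.Away (q₁ (X ta))) (q₁ (X i)) with hc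
  set v : (Fin (N + 1)) → (Localization.Away (q₁ (X ta))) := fun i => if i = p then c i * ↑u⁻¹ else c i with hv
  set ψ : MvPolynomial (Fin (N + 1)) B →+* (Localization.Away (q₁ (X ta))) :=
    eval₂Hom ((algebraMap (MvPolynomial (Fin (N + 1)) B ⧸ I₁) (Localization.Away (q₁ (X ta)))).comp (q₁.comp (C : B →+* MvPolynomial (Fin (N + 1)) B))) v with hψ
  have hψX : ∀ i : (Fin (N + 1)), ψ (X i) = v i := fun i => eval₂Hom_X' _ _ _
  have hψC : ∀ b : B, ψ (C b) = algebraMap (MvPolynomial (Fin (N + 1)) B ⧸ I₁) (Localization.Away (q₁ (X ta))) (q₁ (C b)) := fun b => eval₂Hom_C _ _ _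
  have hq₁f₁ : q₁ f₁ = 0 := by
    rw [hq₁, Ideal.Quotient.eq_zero_iff_mem, hI₁]
    exact Ideal.subset_span rfl
  have hψf₂ : ψ f₂ = 0 := by
    rw [hf₂, map_sub, map_prod, hψC]
    have step : ∀ i ∈ S₁, ψ (X i) = c i * (if i = p then ↑u⁻¹ else 1) := by
      intro i _
      rw [hψX]; simp only [hv]
      by_cases h : i = p
      · rw [if_pos h, if_pos h]
      · rw [if_neg h, if_neg h, mul_one]
    have hψta : ψ (X ta) = c ta := by rw [hψX]; simp only [hv]; rw [if_neg htap]
    rw [hfilter, Finset.prod_insert htaS₁, Finset.prod_congr rfl step,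
      Finset.prod_mul_distrib, Finset.prod_ite_eq' S₁ p (fun _ => (↑u⁻¹ : (Localization.Away (q₁ (X ta))))),
      if_pos hpS₁, hψta]
    have key : c ta * ((∏ i ∈ S₁, c i) * ↑u⁻¹) = (∏ i ∈ S₁, c i) * (↑u * ↑u⁻¹) := by
      rw [huval, hc]; ring
    rw [key, Units.mul_inv, mul_one, hc]
    simp only [← map_prod]
    rw [← map_sub, ← map_sub, ← hf₁, hq₁f₁, map_zero]
  have hker : I₂ ≤ RingHom.ker ψ := by
    rw [hI₂, Ideal.span_le, Set.singleton_subset_iff]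
    exact hψf₂
  set G' : (MvPolynomial (Fin (N + 1)) B ⧸ I₂) →+* (Localization.Away (q₁ (X ta))) := Ideal.Quotient.lift I₂ ψ hker with hG'
  have hG'mk : ∀ r : MvPolynomial (Fin (N + 1)) B, G' (q₂ r) = ψ r := fun r => rfl
  have hG'ta : G' (q₂ (X ta)) = (u : (Localization.Away (q₁ (X ta)))) := by
    rw [hG'mk, hψX]; simp only [hv]; rw [if_neg htap]; simp only [hc]; rw [huval]
  have hunit' : IsUnit (G' (q₂ (X ta))) := hG'ta ▸ u.isUnit
  set G : (Localization.Away (q₂ (X ta))) →+* (Localization.Away (q₁ (X ta))) := IsLocalization.Away.lift (S := (Localization.Away (q₂ (X ta)))) (g := G') (q₂ (X ta)) hunit' with hG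
  have hGe : ∀ r : MvPolynomial (Fin (N + 1)) B, G (algebraMap (MvPolynomial (Fin (N + 1)) B ⧸ I₂) (Localization.Away (q₂ (X ta))) (q₂ r)) = ψ r := by
    intro r
    rw [hG, IsLocalization.Away.lift_eq]
    exact hG'mk r
  -- the composites are the identity
  have hGF : G.comp F = RingHom.id (Localization.Away (q₁ (X ta))) := by
    refine IsLocalization.ringHom_ext (R := (MvPolynomial (Fin (N + 1)) B ⧸ I₁))
      (S := (Localization.Away (q₁ (X ta)))) (Submonoid.powers (q₁ (X ta)))
      (j := G.comp F) (k := RingHom.id (Localization.Away (q₁ (X ta)))) ?_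
    apply Ideal.Quotient.ringHom_ext
    apply MvPolynomial.ringHom_ext
    · intro b
      simp only [RingHom.comp_apply, RingHom.id_apply]
      rw [hFe, hφC, hGe, hψC]
    · intro i
      simp only [RingHom.comp_apply, RingHom.id_apply]
      rw [hFe, hφX]
      by_cases h : i = p
      · rw [if_pos h, hGe, map_mul, hψX, hψX]
        simp only [hv]
        rw [if_pos h, if_neg htap, mul_assoc]
        have h1 : (↑u⁻¹ : (Localization.Away (q₁ (X ta)))) * c ta = 1 := by
          simp only [hc]; rw [← huval, Units.inv_mul]
        rw [h1, mul_one]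
      · rw [if_neg h, hGe, hψX]; simp only [hv]; rw [if_neg h]
  have hFG : F.comp G = RingHom.id (Localization.Away (q₂ (X ta))) := by
    refine IsLocalization.ringHom_ext (R := (MvPolynomial (Fin (N + 1)) B ⧸ I₂))
      (S := (Localization.Away (q₂ (X ta)))) (Submonoid.powers (q₂ (X ta)))
      (j := F.comp G) (k := RingHom.id (Localization.Away (q₂ (X ta)))) ?_
    apply Ideal.Quotient.ringHom_ext
    apply MvPolynomial.ringHom_ext
    · intro b
      simp only [RingHom.comp_apply, RingHom.id_apply]
      rw [hGe, hψC, hFe, hφC]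
    · intro i
      simp only [RingHom.comp_apply, RingHom.id_apply]
      rw [hGe, hψX]; simp only [hv]
      by_cases h : i = p
      · rw [if_pos h, map_mul]
        have hFu : F ((↑u : (Localization.Away (q₁ (X ta))))) = algebraMap (MvPolynomial (Fin (N + 1)) B ⧸ I₂) (Localization.Away (q₂ (X ta))) (q₂ (X ta)) := by
          rw [huval, hFe, hφta]
        have hFuinv : algebraMap (MvPolynomial (Fin (N + 1)) B ⧸ I₂) (Localization.Away (q₂ (X ta))) (q₂ (X ta)) * F ((↑u⁻¹ : (Localization.Away (q₁ (X ta))))) = 1 := by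
          rw [← hFu, ← map_mul, Units.mul_inv, map_one]
        have hFc : F (c i) = algebraMap (MvPolynomial (Fin (N + 1)) B ⧸ I₂) (Localization.Away (q₂ (X ta))) (q₂ (φ (X i))) := by
          simp only [hc]; rw [hFe]
        rw [hFc, hφX, if_pos h, show q₂ (X i * X ta) = q₂ (X i) * q₂ (X ta) from map_mul _ _ _,
          map_mul, mul_assoc, hFuinv, mul_one]
      · rw [if_neg h]
        simp only [hc]
        rw [hFe, hφX, if_neg h]
  refine ⟨RingEquiv.ofRingHom F G hFG hGF, ?_⟩
  intro r
  show F (algebraMap (MvPolynomial (Fin (N + 1)) B ⧸ I₁) (Localization.Away (q₁ (X ta))) (q₁ r)) = algebraMap (MvPolynomial (Fin (N + 1)) B ⧸ I₂) (Localization.Away (q₂ (X ta))) (q₂ (φ r))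
  exact hFe r
end

section
/- Let B be a commutative ring, π ∈ B, N ≥ 0, and 0 ≤ a ≤ N. Let C = B[T₀,…,T_N]/(T₀⋯T_a − π). Then the quotient C/(T_a) is isomorphic as a B-algebra to (B/(π))[T₀,…,T_{a-1},T_{a+1},…,T_N], the polynomial ring in the remaining N variables over B/(π). -/
/-!
Since `T_a` divides `T₀⋯T_a`, the ideals `(T₀⋯T_a - π, T_a)` and `(π, T_a)` coincide, so
`C/(T_a) = B[T₀,…,T_N]/(π, T_a)`. Killing `T_a` leaves a polynomial ring in the other variables
over `B`, and then killing `π` reduces its coefficients modulo `π`.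
-/

open MvPolynomial

theorem Ideal.span_singleton_sub_sup_span_singleton_of_dvd {R : Type*} [CommRing R] {x p : R}
    (c : R) (h : x ∣ p) : Ideal.span {p - c} ⊔ Ideal.span {x} = Ideal.span {c, x} := by
  have hp : p ∈ Ideal.span {x} := Ideal.mem_span_singleton.2 h
  rw [Ideal.span_insert]
  apply le_antisymm <;> refine sup_le ?_ le_sup_right <;> rw [Ideal.span_singleton_le_iff_mem]
  · exact sub_mem (Ideal.mem_sup_right hp) (Ideal.mem_sup_left (Ideal.mem_span_singleton_self c))
  · simpa using
      sub_mem (Ideal.mem_sup_right hp) (Ideal.mem_sup_left (Ideal.mem_span_singleton_self (p - c)))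

namespace MvPolynomial

variable (R : Type*) [CommRing R] (r : R)

noncomputable def quotientSpanCXNoneAlgEquiv (σ : Type*) :
    (MvPolynomial (Option σ) R ⧸ Ideal.span {C r, X none}) ≃ₐ[R]
      MvPolynomial σ (R ⧸ Ideal.span {r}) :=
  (Ideal.quotientEquivAlg _ (Ideal.span {Polynomial.C (C r), Polynomial.X - Polynomial.C 0})
      (optionEquivLeft R σ) (by simp [Ideal.map_span, Set.image_insert_eq])).trans <|
    ((Polynomial.quotientSpanCXSubCAlgEquiv (C r : MvPolynomial σ R) 0).restrictScalars R).trans <|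
      (Ideal.quotientEquivAlgOfEq R (by rw [Ideal.map_span, Set.image_singleton])).trans <|
        (quotientEquivQuotientMvPolynomial _).symm

noncomputable def quotientSpanCXAlgEquiv {n : ℕ} (i : Fin (n + 1)) :
    (MvPolynomial (Fin (n + 1)) R ⧸ Ideal.span {C r, X i}) ≃ₐ[R]
      MvPolynomial (Fin n) (R ⧸ Ideal.span {r}) :=
  (Ideal.quotientEquivAlg _ _ (renameEquiv R (finSuccEquiv' i))
      (by simp [Ideal.map_span, Set.image_insert_eq])).trans <|
    quotientSpanCXNoneAlgEquiv R r (Fin n)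

end MvPolynomial

theorem stmt4_general (B : Type*) [CommRing B] (π : B) (N a : ℕ)
    (ta : Fin (N + 1)) (hta : (ta : ℕ) = a)
    (I : Ideal (MvPolynomial (Fin (N + 1)) B))
    (hI : I = Ideal.span
      {(∏ i ∈ Finset.univ.filter (fun i : Fin (N + 1) => (i : ℕ) ≤ a), X i) - C π}) :
    Nonempty
      (((MvPolynomial (Fin (N + 1)) B ⧸ I) ⧸
          Ideal.span {Ideal.Quotient.mk I (X ta)}) ≃ₐ[B]
        MvPolynomial (Fin N) (B ⧸ Ideal.span {π})) := by
  have hdvd : (X ta : MvPolynomial (Fin (N + 1)) B) ∣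
      ∏ i ∈ Finset.univ.filter (fun i : Fin (N + 1) => (i : ℕ) ≤ a), X i :=
    Finset.dvd_prod_of_mem X (by simp [hta])
  have hspan : Ideal.span {Ideal.Quotient.mk I (X ta)} =
      (Ideal.span {X ta}).map (Ideal.Quotient.mkₐ B I) := by
    rw [Ideal.map_span, Set.image_singleton]; rfl
  have hsup : I ⊔ Ideal.span {X ta} = Ideal.span {C π, X ta} := by
    rw [hI, Ideal.span_singleton_sub_sup_span_singleton_of_dvd _ hdvd]
  exact ⟨(Ideal.quotientEquivAlgOfEq B hspan).trans <|
    (DoubleQuot.quotQuotEquivQuotSupₐ B _ _).trans <|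
      (Ideal.quotientEquivAlgOfEq B hsup).trans <| quotientSpanCXAlgEquiv B π ta⟩

/-- Let `C = B[T₀,…,T_N]/(T₀⋯T_a − π)`.  Then `C/(T_a)` is isomorphic as a
`B`-algebra to the polynomial ring in the remaining `N` variables over `B/(π)`. -/
theorem stmt4 (B : Type*) [CommRing B] (π : B) (N a : ℕ) (ha : a ≤ N)
    (ta : Fin (N + 1)) (hta : (ta : ℕ) = a)
    (I : Ideal (MvPolynomial (Fin (N + 1)) B))
    (hI : I = Ideal.span
      {(∏ i ∈ Finset.univ.filter (fun i : Fin (N + 1) => (i : ℕ) ≤ a), X i) - C π}) :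
    Nonempty
      (((MvPolynomial (Fin (N + 1)) B ⧸ I) ⧸
          Ideal.span {Ideal.Quotient.mk I (X ta)}) ≃ₐ[B]
        MvPolynomial (Fin N) (B ⧸ Ideal.span {π})) :=
  stmt4_general B π N a ta hta I hI
end

section
/- Let B be a discrete valuation ring with uniformizer π, N ≥ 0, and 0 ≤ a ≤ N. Then C = B[T₀,…,T_N]/(T₀⋯T_a − π) is an integral domain. -/
open MvPolynomial

/-!
Singling out `T₀`, the polynomial `T₀⋯T_a − π` is linear in `T₀` over the UFD
`B[T₁,…,T_N]`, with coefficients `T₁⋯T_a` and `−π`. These are relatively prime since every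
variable is prime and does not divide the nonzero constant `π`, so the linear polynomial is
irreducible, hence prime.
-/

theorem MvPolynomial.finSuccEquiv_rename_succ {R : Type*} [CommSemiring R] {n : ℕ}
    (p : MvPolynomial (Fin n) R) : finSuccEquiv R n (rename Fin.succ p) = Polynomial.C p := by
  induction p using MvPolynomial.induction_on with
  | C r => simp [finSuccEquiv_apply]
  | add p q hp hq => simp [hp, hq]
  | mul_X p j hp => simp [hp, finSuccEquiv_X_succ]

theorem MvPolynomial.isRelPrime_prod_X_C {R σ : Type*} [CommRing R] [IsDomain R]
    [UniqueFactorizationMonoid R] (s : Finset σ) {r : R} (hr : r ≠ 0) :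
    IsRelPrime (∏ i ∈ s, X i : MvPolynomial σ R) (C r) :=
  IsRelPrime.prod_left fun i _ ↦ X_prime.irreducible.isRelPrime_iff_not_dvd.mpr
    fun ⟨q, hq⟩ ↦ hr (by simpa using congrArg constantCoeff hq)

theorem MvPolynomial.prime_X_zero_mul_rename_succ_add {R : Type*} [CommRing R] [IsDomain R]
    [UniqueFactorizationMonoid R] {n : ℕ} {p q : MvPolynomial (Fin n) R} (hp : p ≠ 0)
    (hpq : IsRelPrime p q) : Prime (X 0 * rename Fin.succ p + rename Fin.succ q) := by
  have h : finSuccEquiv R n (X 0 * rename Fin.succ p + rename Fin.succ q) =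
      Polynomial.C p * Polynomial.X + Polynomial.C q := by
    rw [map_add, map_mul, finSuccEquiv_X_zero, finSuccEquiv_rename_succ, finSuccEquiv_rename_succ,
      mul_comm]
  refine (MulEquiv.prime_iff (finSuccEquiv R n).toMulEquiv).mp ?_
  change Prime (finSuccEquiv R n _)
  rw [h]
  exact UniqueFactorizationMonoid.irreducible_iff_prime.mp
    (Polynomial.irreducible_C_mul_X_add_C hp hpq)

theorem Fin.prod_filter_val_le {M : Type*} [CommMonoid M] {n : ℕ} (a : ℕ) (f : Fin (n + 1) → M) :
    ∏ i ∈ Finset.univ.filter (fun i : Fin (n + 1) => (i : ℕ) ≤ a), f i =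
      f 0 * ∏ i ∈ Finset.univ.filter (fun i : Fin n => (i : ℕ) + 1 ≤ a), f i.succ := by
  simp [Finset.prod_filter, Fin.prod_univ_succ]

theorem stmt6_general (B : Type*) [CommRing B] [IsDomain B] [IsDiscreteValuationRing B]
    (π : B) (hπ : Irreducible π) (N a : ℕ) :
    IsDomain (MvPolynomial (Fin (N + 1)) B ⧸
      Ideal.span
        {(∏ i ∈ Finset.univ.filter (fun i : Fin (N + 1) => (i : ℕ) ≤ a), X i) - C π}) := by
  set s := Finset.univ.filter (fun i : Fin N => (i : ℕ) + 1 ≤ a)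
  have hf : (∏ i ∈ Finset.univ.filter (fun i : Fin (N + 1) => (i : ℕ) ≤ a), X i) - C π =
      X 0 * rename Fin.succ (∏ i ∈ s, X i) + rename Fin.succ (C (-π)) := by
    simp [Fin.prod_filter_val_le, map_prod, sub_eq_add_neg, s]
  have hprime := prime_X_zero_mul_rename_succ_add
    (Finset.prod_ne_zero_iff.mpr fun i _ ↦ X_ne_zero i)
    (isRelPrime_prod_X_C (R := B) s (neg_ne_zero.mpr hπ.ne_zero))
  rw [hf, Ideal.Quotient.isDomain_iff_prime]
  exact Ideal.isPrime_span_singleton_of_prime hprime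

/-- For a discrete valuation ring `B` with uniformizer `π`,
`C = B[T₀,…,T_N]/(T₀⋯T_a − π)` is an integral domain. -/
theorem stmt6 (B : Type*) [CommRing B] [IsDomain B] [IsDiscreteValuationRing B]
    (π : B) (hπ : Irreducible π) (N a : ℕ) (ha : a ≤ N) :
    IsDomain (MvPolynomial (Fin (N + 1)) B ⧸
      Ideal.span
        {(∏ i ∈ Finset.univ.filter (fun i : Fin (N + 1) => (i : ℕ) ≤ a), X i) - C π}) :=
  stmt6_general B π hπ N a
end

section
/- Let B be a commutative ring, π ∈ B, N ≥ 1, and 1 ≤ b < a ≤ N. The B-algebra homomorphism B[T⁽¹⁾₀,…,T⁽¹⁾_N] → B[T₀,…,T_N] sending T⁽¹⁾_{b+1} ↦ T_b·T_{b+1} and T⁽¹⁾_r ↦ T_r for r ≠ b+1 induces an isomorphism of B-algebras (B[T⁽¹⁾₀,…,T⁽¹⁾_N]/(T⁽¹⁾_{b+1}⋯T⁽¹⁾_a − π))_{T⁽¹⁾₀⋯T⁽¹⁾_b} ≅ (B[T₀,…,T_N]/(T_b⋯T_a − π))_{T₀⋯T_b}. -/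
set_option synthInstance.maxHeartbeats 1000000
set_option maxHeartbeats 1000000

open MvPolynomial

lemma aux_prod_ite {ι : Type*} [DecidableEq ι] {M : Type*} [CommMonoid M]
    (s : Finset ι) (t : ι) (ht : t ∈ s) (p : ι → Prop) [DecidablePred p]
    (hp : ∀ i ∈ s, p i ↔ i = t) (g : ι → M) (c : M) :
    (∏ i ∈ s, if p i then c * g i else g i) = c * ∏ i ∈ s, g i := by
  rw [← Finset.mul_prod_erase s (fun i => if p i then c * g i else g i) ht,
    ← Finset.mul_prod_erase s g ht, if_pos ((hp t ht).mpr rfl),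
    Finset.prod_congr rfl (fun i hi => if_neg (fun h =>
      (Finset.mem_erase.mp hi).1 ((hp i (Finset.mem_erase.mp hi).2).mp h))), mul_assoc]

lemma aux_prod_ite' {ι : Type*} {M : Type*} [CommMonoid M]
    (s : Finset ι) (p : ι → Prop) [DecidablePred p]
    (hp : ∀ i ∈ s, ¬ p i) (g h : ι → M) :
    (∏ i ∈ s, if p i then h i else g i) = ∏ i ∈ s, g i :=
  Finset.prod_congr rfl fun i hi => if_neg (hp i hi)


/-- The `B`-algebra map `B[T⁽¹⁾₀,…,T⁽¹⁾_N] → B[T₀,…,T_N]`, `T⁽¹⁾_{b+1} ↦ T_b·T_{b+1}`,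
`T⁽¹⁾_r ↦ T_r` (`r ≠ b+1`), induces an isomorphism
`(B[T⁽¹⁾]/(T⁽¹⁾_{b+1}⋯T⁽¹⁾_a − π))_{T⁽¹⁾₀⋯T⁽¹⁾_b} ≅ (B[T]/(T_b⋯T_a − π))_{T₀⋯T_b}`. -/
theorem stmt13 (B : Type*) [CommRing B] (π : B) (N a b : ℕ)
    (hN : 1 ≤ N) (hb : 1 ≤ b) (hba : b < a) (haN : a ≤ N)
    (tb : Fin (N + 1)) (htb : (tb : ℕ) = b)
    (φ : MvPolynomial (Fin (N + 1)) B →ₐ[B] MvPolynomial (Fin (N + 1)) B)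
    (hφ : φ = aeval (fun r : Fin (N + 1) =>
      if (r : ℕ) = b + 1 then X tb * X r else X r))
    (I₁ I₂ : Ideal (MvPolynomial (Fin (N + 1)) B))
    (hI₁ : I₁ = Ideal.span
      {(∏ i ∈ Finset.univ.filter
          (fun i : Fin (N + 1) => b + 1 ≤ (i : ℕ) ∧ (i : ℕ) ≤ a), X i) - C π})
    (hI₂ : I₂ = Ideal.span
      {(∏ i ∈ Finset.univ.filter
          (fun i : Fin (N + 1) => b ≤ (i : ℕ) ∧ (i : ℕ) ≤ a), X i) - C π}) :
    ∃ e : Localization.Away (Ideal.Quotient.mk I₁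
            (∏ i ∈ Finset.univ.filter (fun i : Fin (N + 1) => (i : ℕ) ≤ b), X i)) ≃+*
          Localization.Away (Ideal.Quotient.mk I₂
            (∏ i ∈ Finset.univ.filter (fun i : Fin (N + 1) => (i : ℕ) ≤ b), X i)),
      ∀ p : MvPolynomial (Fin (N + 1)) B,
        e (algebraMap (MvPolynomial (Fin (N + 1)) B ⧸ I₁)
            (Localization.Away (Ideal.Quotient.mk I₁
              (∏ i ∈ Finset.univ.filter (fun i : Fin (N + 1) => (i : ℕ) ≤ b), X i)))
            (Ideal.Quotient.mk I₁ p)) =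
          algebraMap (MvPolynomial (Fin (N + 1)) B ⧸ I₂)
            (Localization.Away (Ideal.Quotient.mk I₂
              (∏ i ∈ Finset.univ.filter (fun i : Fin (N + 1) => (i : ℕ) ≤ b), X i)))
            (Ideal.Quotient.mk I₂ (φ p)) := by
  classical
  set R := MvPolynomial (Fin (N + 1)) B with hR
  set S₀ : Finset (Fin (N + 1)) :=
    Finset.univ.filter (fun i : Fin (N + 1) => (i : ℕ) ≤ b) with hS₀
  set S₁ : Finset (Fin (N + 1)) :=
    Finset.univ.filter (fun i : Fin (N + 1) => b + 1 ≤ (i : ℕ) ∧ (i : ℕ) ≤ a) with hS₁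
  set S₂ : Finset (Fin (N + 1)) :=
    Finset.univ.filter (fun i : Fin (N + 1) => b ≤ (i : ℕ) ∧ (i : ℕ) ≤ a) with hS₂
  set f : R := ∏ i ∈ S₀, X i with hf
  set g1 : R := ∏ i ∈ S₁, X i with hg1
  set g2 : R := ∏ i ∈ S₂, X i with hg2
  set t₁ : Fin (N + 1) := ⟨b + 1, by omega⟩ with ht₁def
  have ht₁ : (t₁ : ℕ) = b + 1 := rfl
  -- basic membership facts
  have hS₂eq : S₂ = insert tb S₁ := by
    ext i
    simp only [hS₁, hS₂, Finset.mem_insert, Finset.mem_filter, Finset.mem_univ, true_and,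
      Fin.ext_iff, htb]
    omega
  have htbS₁ : tb ∉ S₁ := by simp [hS₁, htb]
  have ht₁S₁ : t₁ ∈ S₁ := by simp [hS₁, ht₁]; omega
  have htbS₀ : tb ∈ S₀ := by simp [hS₀, htb]
  have hval : ∀ i ∈ S₁, ((i : ℕ) = b + 1 ↔ i = t₁) := by
    intro i _; rw [Fin.ext_iff, ht₁]
  have hS₀val : ∀ i ∈ S₀, ¬ ((i : ℕ) = b + 1) := by
    intro i hi; simp only [hS₀, Finset.mem_filter] at hi; omega
  have hg2g1 : g2 = X tb * g1 := by
    rw [hg2, hS₂eq, Finset.prod_insert htbS₁]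
  -- φ on generators
  have hφX : ∀ i : Fin (N + 1),
      φ (X i) = if (i : ℕ) = b + 1 then X tb * X i else X i := by
    intro i; rw [hφ, aeval_X]
  have hφC : ∀ r : B, φ (C r) = C r := fun r => by
    rw [hφ, aeval_C, algebraMap_eq]
  have hφg1 : φ g1 = g2 := by
    rw [hg1, map_prod]
    calc (∏ i ∈ S₁, φ (X i))
        = ∏ i ∈ S₁, (if (i : ℕ) = b + 1 then X tb * X i else X i) :=
          Finset.prod_congr rfl fun i _ => hφX i
      _ = X tb * ∏ i ∈ S₁, X i := aux_prod_ite S₁ t₁ ht₁S₁ _ hval _ _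
      _ = g2 := by rw [hg2g1]
  have hφf : φ f = f := by
    rw [hf, map_prod]
    calc (∏ i ∈ S₀, φ (X i))
        = ∏ i ∈ S₀, (if (i : ℕ) = b + 1 then X tb * X i else X i) :=
          Finset.prod_congr rfl fun i _ => hφX i
      _ = ∏ i ∈ S₀, X i := aux_prod_ite' S₀ _ hS₀val _ _
  -- quotients and localizations
  set A₁ := R ⧸ I₁ with hA₁
  set A₂ := R ⧸ I₂ with hA₂
  set q₁ : R →+* A₁ := Ideal.Quotient.mk I₁ with hq₁
  set q₂ : R →+* A₂ := Ideal.Quotient.mk I₂ with hq₂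
  set L₁ := Localization.Away (q₁ f) with hL₁
  set L₂ := Localization.Away (q₂ f) with hL₂
  set θ₁ : R →+* L₁ := (algebraMap A₁ L₁).comp q₁ with hθ₁
  set θ₂ : R →+* L₂ := (algebraMap A₂ L₂).comp q₂ with hθ₂
  -- the map Φq : A₁ → A₂
  have hgen₁ : q₁ (g1 - C π) = 0 := by
    rw [hq₁, Ideal.Quotient.eq_zero_iff_mem, hI₁]
    exact Ideal.mem_span_singleton_self _
  have hgen₂ : q₂ (g2 - C π) = 0 := by
    rw [hq₂, Ideal.Quotient.eq_zero_iff_mem, hI₂]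
    exact Ideal.mem_span_singleton_self _
  have hker₁ : ∀ x ∈ I₁, (q₂.comp (φ : R →+* R)) x = 0 := by
    intro x hx
    rw [hI₁, Ideal.mem_span_singleton'] at hx
    obtain ⟨c, rfl⟩ := hx
    rw [map_mul]
    have : (q₂.comp (φ : R →+* R)) (g1 - C π) = 0 := by
      simp only [RingHom.comp_apply]
      show q₂ (φ (g1 - C π)) = 0
      rw [map_sub, hφg1, hφC]
      exact hgen₂
    rw [this, mul_zero]
  set Φq : A₁ →+* A₂ := Ideal.Quotient.lift I₁ (q₂.comp (φ : R →+* R)) hker₁ with hΦq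
  have hΦqq₁ : ∀ x : R, Φq (q₁ x) = q₂ (φ x) := fun x => rfl
  have hΦqf : Φq (q₁ f) = q₂ f := by rw [hΦqq₁, hφf]
  -- forward map on localizations
  have hunit₂ : IsUnit (((algebraMap A₂ L₂).comp Φq) (q₁ f)) := by
    rw [RingHom.comp_apply, hΦqf]
    exact IsLocalization.Away.algebraMap_isUnit (S := L₂) (q₂ f)
  set Φ : L₁ →+* L₂ := IsLocalization.Away.lift (S := L₁) (g := (algebraMap A₂ L₂).comp Φq) (q₁ f) hunit₂ with hΦ
  have hΦθ₁ : ∀ x : R, Φ (θ₁ x) = θ₂ (φ x) := by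
    intro x
    rw [hθ₁, RingHom.comp_apply, hΦ, IsLocalization.Away.lift_eq]
    rfl
  -- invertibility of X tb in L₁
  have huf : IsUnit (θ₁ f) := by
    rw [hθ₁, RingHom.comp_apply]
    exact IsLocalization.Away.algebraMap_isUnit (S := L₁) (q₁ f)
  have hu : IsUnit (θ₁ (X tb)) := by
    apply isUnit_of_mul_isUnit_left (y := θ₁ (∏ i ∈ S₀.erase tb, X i))
    rw [← map_mul, Finset.mul_prod_erase S₀ X htbS₀]
    exact huf
  set u : L₁ := θ₁ (X tb) with hudef
  set v : L₁ := ↑hu.unit⁻¹ with hv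
  have hvu : v * u = 1 := hu.val_inv_mul
  have huv : u * v = 1 := hu.mul_val_inv
  -- the reverse map ψ : R → L₁
  set ψ : R →+* L₁ := eval₂Hom (θ₁.comp C)
    (fun i : Fin (N + 1) => if (i : ℕ) = b + 1 then v * θ₁ (X i) else θ₁ (X i)) with hψ
  have hψX : ∀ i : Fin (N + 1),
      ψ (X i) = if (i : ℕ) = b + 1 then v * θ₁ (X i) else θ₁ (X i) := by
    intro i; rw [hψ]; exact eval₂Hom_X' _ _ i
  have hψC : ∀ r : B, ψ (C r) = θ₁ (C r) := by
    intro r; rw [hψ]; exact eval₂Hom_C _ _ r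
  have hψg2 : ψ g2 = θ₁ g1 := by
    rw [hg2, hS₂eq, map_prod, Finset.prod_insert htbS₁]
    have h1 : ψ (X tb) = u := by rw [hψX, if_neg (by omega), hudef]
    have h2 : (∏ i ∈ S₁, ψ (X i)) = v * θ₁ g1 := by
      calc (∏ i ∈ S₁, ψ (X i))
          = ∏ i ∈ S₁, (if (i : ℕ) = b + 1 then v * θ₁ (X i) else θ₁ (X i)) :=
            Finset.prod_congr rfl fun i _ => hψX i
        _ = v * ∏ i ∈ S₁, θ₁ (X i) := aux_prod_ite S₁ t₁ ht₁S₁ _ hval _ _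
        _ = v * θ₁ g1 := by rw [← map_prod]
    rw [h1, h2, ← mul_assoc, huv, one_mul]
  have hψf : ψ f = θ₁ f := by
    calc ψ (∏ i ∈ S₀, X i) = ∏ i ∈ S₀, ψ (X i) := map_prod ψ X S₀
      _ = ∏ i ∈ S₀, θ₁ (X i) :=
          Finset.prod_congr rfl fun i hi => by rw [hψX, if_neg (hS₀val i hi)]
      _ = θ₁ (∏ i ∈ S₀, X i) := (map_prod θ₁ X S₀).symm
  have hker₂ : ∀ x ∈ I₂, ψ x = 0 := by
    intro x hx
    rw [hI₂, Ideal.mem_span_singleton'] at hx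
    obtain ⟨c, rfl⟩ := hx
    rw [map_mul]
    have h0 : ψ (g2 - C π) = 0 := by
      rw [map_sub, hψg2, hψC, ← map_sub]
      show (algebraMap A₁ L₁) (q₁ (g1 - C π)) = 0
      rw [hgen₁, map_zero]
    rw [h0]
    exact mul_zero (ψ c)
  set Ψq : A₂ →+* L₁ := Ideal.Quotient.lift I₂ ψ hker₂ with hΨq
  have hΨqq₂ : ∀ x : R, Ψq (q₂ x) = ψ x := fun x => rfl
  have hunit₁ : IsUnit (Ψq (q₂ f)) := by rw [hΨqq₂, hψf]; exact huf
  set Ψ : L₂ →+* L₁ := IsLocalization.Away.lift (S := L₂) (g := Ψq) (q₂ f) hunit₁ with hΨ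
  have hΨθ₂ : ∀ x : R, Ψ (θ₂ x) = ψ x := by
    intro x
    rw [hθ₂, RingHom.comp_apply, hΨ, IsLocalization.Away.lift_eq]
    exact hΨqq₂ x
  -- composite identities
  have hΦu : Φ u = θ₂ (X tb) := by
    rw [hudef, hΦθ₁, hφX, if_neg (by omega)]
  have hΦv : Φ v * θ₂ (X tb) = 1 := by
    rw [← hΦu, ← map_mul, hvu, map_one]
  have comp₁ : Φ.comp Ψ = RingHom.id L₂ := by
    refine IsLocalization.ringHom_ext (R := A₂) (S := L₂) (P := L₂) (Submonoid.powers (q₂ f)) ?_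
    apply Ideal.Quotient.ringHom_ext
    apply MvPolynomial.ringHom_ext
    · intro r
      simp only [RingHom.comp_apply, RingHom.id_apply]
      show Φ (Ψ (θ₂ (C r))) = θ₂ (C r)
      rw [hΨθ₂, hψC, hΦθ₁, hφC]
    · intro i
      simp only [RingHom.comp_apply, RingHom.id_apply]
      show Φ (Ψ (θ₂ (X i))) = θ₂ (X i)
      rw [hΨθ₂, hψX]
      by_cases hi : (i : ℕ) = b + 1
      · rw [if_pos hi, map_mul, hΦθ₁, hφX, if_pos hi, map_mul, ← mul_assoc, hΦv, one_mul]
      · rw [if_neg hi, hΦθ₁, hφX, if_neg hi]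
  have comp₂ : Ψ.comp Φ = RingHom.id L₁ := by
    refine IsLocalization.ringHom_ext (R := A₁) (S := L₁) (P := L₁) (Submonoid.powers (q₁ f)) ?_
    apply Ideal.Quotient.ringHom_ext
    apply MvPolynomial.ringHom_ext
    · intro r
      simp only [RingHom.comp_apply, RingHom.id_apply]
      show Ψ (Φ (θ₁ (C r))) = θ₁ (C r)
      rw [hΦθ₁, hφC, hΨθ₂, hψC]
    · intro i
      simp only [RingHom.comp_apply, RingHom.id_apply]
      show Ψ (Φ (θ₁ (X i))) = θ₁ (X i)
      rw [hΦθ₁, hφX]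
      by_cases hi : (i : ℕ) = b + 1
      · rw [if_pos hi, map_mul, map_mul, hΨθ₂, hΨθ₂, hψX, hψX,
          if_neg (show ¬((tb : ℕ) = b + 1) by omega), if_pos hi,
          ← hudef, ← mul_assoc, huv, one_mul]
      · rw [if_neg hi, hΨθ₂, hψX, if_neg hi]
  refine ⟨RingEquiv.ofRingHom Φ Ψ comp₁ comp₂, fun p => ?_⟩
  show Φ (θ₁ p) = θ₂ (φ p)
  exact hΦθ₁ p
end

section
/- Let k be a commutative ring and D = k[T₀,T₁]/(T₀T₁). Then the localization D_{T₀+T₁} is isomorphic as a k-algebra to k[T₁]_{T₁} × k[T₀]_{T₀}, i.e. inverting T₀+T₁ in D splits D into the product of the localizations of its two components away from their intersection. -/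
set_option synthInstance.maxHeartbeats 1000000
set_option maxHeartbeats 1000000

open MvPolynomial


private lemma sub_aeval_mem {k : Type*} [CommRing k] (j : Fin 2)
    (v : Fin 2 → MvPolynomial (Fin 2) k)
    (hv : ∀ i, X i - v i ∈ Ideal.span {(X j : MvPolynomial (Fin 2) k)})
    (p : MvPolynomial (Fin 2) k) :
    p - aeval v p ∈ Ideal.span {(X j : MvPolynomial (Fin 2) k)} := by
  induction p using MvPolynomial.induction_on with
  | C a => simp
  | add p q hp hq => simpa [add_sub_add_comm] using Ideal.add_mem _ hp hq
  | mul_X p i hp =>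
      rw [map_mul, aeval_X]
      have h : p * X i - aeval v p * v i
          = (p - aeval v p) * X i + aeval v p * (X i - v i) := by ring
      rw [h]
      exact Ideal.add_mem _ (Ideal.mul_mem_right _ _ hp) (Ideal.mul_mem_left _ _ (hv i))

private lemma ker0 {k : Type*} [CommRing k] (p : MvPolynomial (Fin 2) k)
    (h : aeval ![(Polynomial.X : Polynomial k), 0] p = 0) :
    p ∈ Ideal.span {(X 1 : MvPolynomial (Fin 2) k)} := by
  have h2 : p - aeval ![(X 0 : MvPolynomial (Fin 2) k), 0] p ∈
      Ideal.span {(X 1 : MvPolynomial (Fin 2) k)} := by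
    refine sub_aeval_mem 1 _ (fun i => ?_) p
    fin_cases i
    · simp
    · show (X 1 : MvPolynomial (Fin 2) k) - ![X 0, 0] 1 ∈ _
      simp only [Matrix.cons_val_one, Matrix.head_cons, Matrix.cons_val_zero, sub_zero]
      exact Ideal.subset_span (Set.mem_singleton _)
  have h3 : (aeval ![(X 0 : MvPolynomial (Fin 2) k), 0]) p
      = Polynomial.aeval (X 0 : MvPolynomial (Fin 2) k)
          (aeval ![(Polynomial.X : Polynomial k), 0] p) := by
    have : (aeval ![(X 0 : MvPolynomial (Fin 2) k), 0])
        = ((Polynomial.aeval (X 0 : MvPolynomial (Fin 2) k)).comp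
            (aeval ![(Polynomial.X : Polynomial k), 0])) := by
      apply MvPolynomial.algHom_ext
      intro i
      fin_cases i <;> simp
    rw [this]; rfl
  rw [h, map_zero] at h3
  rwa [h3, sub_zero] at h2

private lemma ker1 {k : Type*} [CommRing k] (p : MvPolynomial (Fin 2) k)
    (h : aeval ![0, (Polynomial.X : Polynomial k)] p = 0) :
    p ∈ Ideal.span {(X 0 : MvPolynomial (Fin 2) k)} := by
  have h2 : p - aeval ![0, (X 1 : MvPolynomial (Fin 2) k)] p ∈
      Ideal.span {(X 0 : MvPolynomial (Fin 2) k)} := by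
    refine sub_aeval_mem 0 _ (fun i => ?_) p
    fin_cases i
    · show (X 0 : MvPolynomial (Fin 2) k) - ![0, X 1] 0 ∈ _
      simp only [Matrix.cons_val_zero, sub_zero]
      exact Ideal.subset_span (Set.mem_singleton _)
    · simp
  have h3 : (aeval ![0, (X 1 : MvPolynomial (Fin 2) k)]) p
      = Polynomial.aeval (X 1 : MvPolynomial (Fin 2) k)
          (aeval ![0, (Polynomial.X : Polynomial k)] p) := by
    have : (aeval ![0, (X 1 : MvPolynomial (Fin 2) k)])
        = ((Polynomial.aeval (X 1 : MvPolynomial (Fin 2) k)).comp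
            (aeval ![0, (Polynomial.X : Polynomial k)])) := by
      apply MvPolynomial.algHom_ext
      intro i
      fin_cases i <;> simp
    rw [this]; rfl
  rw [h, map_zero] at h3
  rwa [h3, sub_zero] at h2

private lemma ker_both {k : Type*} [CommRing k] (p : MvPolynomial (Fin 2) k)
    (h0 : aeval ![(Polynomial.X : Polynomial k), 0] p = 0)
    (h1 : aeval ![0, (Polynomial.X : Polynomial k)] p = 0) :
    p ∈ Ideal.span {(X 0 * X 1 : MvPolynomial (Fin 2) k)} := by
  obtain ⟨a, ha⟩ := Ideal.mem_span_singleton'.1 (ker0 p h0)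
  have hX : aeval ![0, (Polynomial.X : Polynomial k)] a * Polynomial.X = 0 := by
    have := h1
    rw [← ha, map_mul, aeval_X] at this
    simpa using this
  have ha0 : aeval ![0, (Polynomial.X : Polynomial k)] a = 0 :=
    mem_nonZeroDivisors_iff_right.1 Polynomial.monic_X.mem_nonZeroDivisors _ hX
  obtain ⟨c, hc⟩ := Ideal.mem_span_singleton'.1 (ker1 a ha0)
  refine Ideal.mem_span_singleton'.2 ⟨c, ?_⟩
  rw [← ha, ← hc]; ring

/-- For `D = k[T₀,T₁]/(T₀T₁)`, inverting `T₀+T₁` splits `D` into the product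
`k[T₁]_{T₁} × k[T₀]_{T₀}`, as `k`-algebras (the isomorphism being compatible with
the structure maps from `k`). -/
theorem stmt16 (k : Type*) [CommRing k]
    (I : Ideal (MvPolynomial (Fin 2) k))
    (hI : I = Ideal.span {X 0 * X 1}) :
    ∃ e : Localization.Away (Ideal.Quotient.mk I (X 0 + X 1)) ≃+*
          Localization.Away (Polynomial.X : Polynomial k) ×
            Localization.Away (Polynomial.X : Polynomial k),
      ∀ c : k,
        e (algebraMap (MvPolynomial (Fin 2) k ⧸ I)
            (Localization.Away (Ideal.Quotient.mk I (X 0 + X 1)))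
            (Ideal.Quotient.mk I (C c))) =
          (algebraMap (Polynomial k) (Localization.Away (Polynomial.X : Polynomial k))
              (Polynomial.C c),
            algebraMap (Polynomial k) (Localization.Away (Polynomial.X : Polynomial k))
              (Polynomial.C c)) := by
  classical
  set A := Polynomial k
  set L := Localization.Away (Polynomial.X : A) with hL
  set τ0 : MvPolynomial (Fin 2) k →+* A :=
    (aeval ![(Polynomial.X : A), 0] : MvPolynomial (Fin 2) k →ₐ[k] A).toRingHom with hτ0
  set τ1 : MvPolynomial (Fin 2) k →+* A :=
    (aeval ![0, (Polynomial.X : A)] : MvPolynomial (Fin 2) k →ₐ[k] A).toRingHom with hτ1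
  set φ₀ : MvPolynomial (Fin 2) k →+* L × L :=
    ((algebraMap A L).comp τ0).prod ((algebraMap A L).comp τ1) with hφ₀
  have hφ₀gen : φ₀ (X 0 * X 1) = 0 := by
    simp [hφ₀, hτ0, hτ1, Prod.ext_iff]
  have hIker : ∀ a ∈ I, φ₀ a = 0 := by
    intro a ha
    rw [hI] at ha
    obtain ⟨c, hc⟩ := Ideal.mem_span_singleton'.1 ha
    rw [← hc, map_mul, hφ₀gen, mul_zero]
  set φ : (MvPolynomial (Fin 2) k ⧸ I) →+* L × L := Ideal.Quotient.lift I φ₀ hIker with hφ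
  set s : MvPolynomial (Fin 2) k ⧸ I := Ideal.Quotient.mk I (X 0 + X 1) with hs
  -- φ s = (algX, algX)
  have hXunit : IsUnit (algebraMap A L Polynomial.X) :=
    IsLocalization.Away.algebraMap_isUnit _
  have hφs : φ s = (algebraMap A L Polynomial.X, algebraMap A L Polynomial.X) := by
    simp [hφ, hs, hφ₀, hτ0, hτ1, Prod.ext_iff]
  have hu : IsUnit (φ s) := by
    rw [hφs]
    obtain ⟨c, hc⟩ := hXunit.exists_right_inv
    exact IsUnit.of_mul_eq_one (c, c) (by simp [Prod.ext_iff, hc])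
  set Φ : Localization.Away s →+* L × L := IsLocalization.Away.lift (S := Localization.Away s) (g := φ) s hu with hΦdef
  have hΦ : ∀ d, Φ (algebraMap (MvPolynomial (Fin 2) k ⧸ I) (Localization.Away s) d) = φ d :=
    fun d => IsLocalization.Away.lift_eq s hu d
  have halg : Function.Injective (algebraMap A L) :=
    IsLocalization.injective L (Submonoid.powers_le.2 Polynomial.monic_X.mem_nonZeroDivisors)
  -- injectivity
  have hinj : Function.Injective Φ := by
    rw [injective_iff_map_eq_zero]
    intro z hz
    obtain ⟨⟨d, m⟩, hd⟩ := IsLocalization.surj (Submonoid.powers s) z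
    have hmunit : IsUnit (algebraMap (MvPolynomial (Fin 2) k ⧸ I) (Localization.Away s) m) :=
      IsLocalization.map_units (Localization.Away s) m
    have hφd : φ d = 0 := by
      rw [← hΦ d, ← hd, map_mul, hz, zero_mul]
    obtain ⟨q, rfl⟩ := Ideal.Quotient.mk_surjective d
    have hq : φ₀ q = 0 := by rwa [hφ, Ideal.Quotient.lift_mk] at hφd
    have hq0 : τ0 q = 0 := by
      apply halg
      rw [map_zero]
      exact congrArg Prod.fst hq
    have hq1 : τ1 q = 0 := by
      apply halg
      rw [map_zero]
      exact congrArg Prod.snd hq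
    have hqI : q ∈ I := by
      rw [hI]
      exact ker_both q hq0 hq1
    have : Ideal.Quotient.mk I q = 0 := (Ideal.Quotient.eq_zero_iff_mem).2 hqI
    rw [this, map_zero] at hd
    exact (hmunit.mul_left_eq_zero).1 hd
  -- surjectivity
  set ι0 : A →+* MvPolynomial (Fin 2) k :=
    (Polynomial.aeval (X 0 : MvPolynomial (Fin 2) k)).toRingHom with hι0def
  set ι1 : A →+* MvPolynomial (Fin 2) k :=
    (Polynomial.aeval (X 1 : MvPolynomial (Fin 2) k)).toRingHom with hι1def
  have hτι0 : ∀ p : A, τ0 (ι0 p) = p := by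
    intro p
    have : (aeval ![(Polynomial.X : A), 0]).comp
        (Polynomial.aeval (X 0 : MvPolynomial (Fin 2) k)) = AlgHom.id k A := by
      apply Polynomial.algHom_ext
      simp
      rfl
    calc τ0 (ι0 p) = ((aeval ![(Polynomial.X : A), 0]).comp
        (Polynomial.aeval (X 0 : MvPolynomial (Fin 2) k))) p := rfl
    _ = p := by rw [this]; rfl
  have hτι1 : ∀ p : A, τ1 (ι1 p) = p := by
    intro p
    have : (aeval ![0, (Polynomial.X : A)]).comp
        (Polynomial.aeval (X 1 : MvPolynomial (Fin 2) k)) = AlgHom.id k A := by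
      apply Polynomial.algHom_ext
      simp
      rfl
    calc τ1 (ι1 p) = ((aeval ![0, (Polynomial.X : A)]).comp
        (Polynomial.aeval (X 1 : MvPolynomial (Fin 2) k))) p := rfl
    _ = p := by rw [this]; rfl
  have hτ01 : ∀ p : A, τ1 (ι0 p * X 0) = 0 := by
    intro p
    rw [map_mul]
    have : τ1 (X 0) = 0 := by simp [hτ1]
    rw [this, mul_zero]
  have hτ10 : ∀ p : A, τ0 (ι1 p * X 1) = 0 := by
    intro p
    rw [map_mul]
    have : τ0 (X 1) = 0 := by simp [hτ0]
    rw [this, mul_zero]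
  have hsurj : Function.Surjective Φ := by
    rintro ⟨a, b⟩
    obtain ⟨⟨p, xp⟩, hp⟩ := IsLocalization.surj (Submonoid.powers (Polynomial.X : A)) a
    obtain ⟨⟨q, xq⟩, hq⟩ := IsLocalization.surj (Submonoid.powers (Polynomial.X : A)) b
    obtain ⟨n, hn⟩ := xp.2
    obtain ⟨m, hm⟩ := xq.2
    rw [show (xp : A) = Polynomial.X ^ n from hn.symm] at hp
    rw [show (xq : A) = Polynomial.X ^ m from hm.symm] at hq
    set w : Localization.Away s := IsLocalization.Away.invSelf s with hw
    have hsw : Φ (algebraMap _ (Localization.Away s) s) * Φ w = 1 := by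
      have h1 := IsLocalization.Away.mul_invSelf (S := Localization.Away s) s
      rw [← map_mul, hw, h1, map_one]
    rw [hΦ, hφs] at hsw
    have hv0 : algebraMap A L Polynomial.X * (Φ w).1 = 1 := congrArg Prod.fst hsw
    have hv1 : algebraMap A L Polynomial.X * (Φ w).2 = 1 := congrArg Prod.snd hsw
    refine ⟨algebraMap _ (Localization.Away s) (Ideal.Quotient.mk I (ι0 p * X 0)) * w ^ (n + 1)
      + algebraMap _ (Localization.Away s) (Ideal.Quotient.mk I (ι1 q * X 1)) * w ^ (m + 1), ?_⟩
    have key : ∀ r : MvPolynomial (Fin 2) k,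
        Φ (algebraMap (MvPolynomial (Fin 2) k ⧸ I) (Localization.Away s)
          (Ideal.Quotient.mk I r)) = φ₀ r := fun r => by
      rw [hΦ, hφ, Ideal.Quotient.lift_mk]
    rw [map_add Φ, map_mul Φ, map_mul Φ, map_pow Φ, map_pow Φ, key, key]
    apply Prod.ext
    · have h1 : (φ₀ (ι0 p * X 0)).1 = algebraMap A L (p * Polynomial.X) := by
        simp only [hφ₀, RingHom.prod_apply, RingHom.comp_apply]
        rw [map_mul, hτι0]
        have : τ0 (X 0) = Polynomial.X := by simp [hτ0]
        rw [this]
      have h2 : (φ₀ (ι1 q * X 1)).1 = 0 := by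
        simp only [hφ₀, RingHom.prod_apply, RingHom.comp_apply]
        rw [hτ10, map_zero]
      simp only [Prod.fst_add, Prod.fst_mul, Prod.pow_fst, h1, h2, zero_mul, add_zero]
      have hpow : (algebraMap A L Polynomial.X) ^ (n + 1) * (Φ w).1 ^ (n + 1) = 1 := by
        rw [← mul_pow, hv0, one_pow]
      calc algebraMap A L (p * Polynomial.X) * (Φ w).1 ^ (n + 1)
          = (a * algebraMap A L (Polynomial.X ^ n)) * algebraMap A L Polynomial.X
              * (Φ w).1 ^ (n + 1) := by rw [map_mul, ← hp]
        _ = a * ((algebraMap A L Polynomial.X) ^ (n + 1) * (Φ w).1 ^ (n + 1)) := by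
              rw [map_pow]; ring
        _ = a := by rw [hpow, mul_one]
    · have h1 : (φ₀ (ι1 q * X 1)).2 = algebraMap A L (q * Polynomial.X) := by
        simp only [hφ₀, RingHom.prod_apply, RingHom.comp_apply]
        rw [map_mul, hτι1]
        have : τ1 (X 1) = Polynomial.X := by simp [hτ1]
        rw [this]
      have h2 : (φ₀ (ι0 p * X 0)).2 = 0 := by
        simp only [hφ₀, RingHom.prod_apply, RingHom.comp_apply]
        rw [hτ01, map_zero]
      simp only [Prod.snd_add, Prod.snd_mul, Prod.pow_snd, h1, h2, zero_mul, zero_add]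
      have hpow : (algebraMap A L Polynomial.X) ^ (m + 1) * (Φ w).2 ^ (m + 1) = 1 := by
        rw [← mul_pow, hv1, one_pow]
      calc algebraMap A L (q * Polynomial.X) * (Φ w).2 ^ (m + 1)
          = (b * algebraMap A L (Polynomial.X ^ m)) * algebraMap A L Polynomial.X
              * (Φ w).2 ^ (m + 1) := by rw [map_mul, ← hq]
        _ = b * ((algebraMap A L Polynomial.X) ^ (m + 1) * (Φ w).2 ^ (m + 1)) := by
              rw [map_pow]; ring
        _ = b := by rw [hpow, mul_one]
  refine ⟨RingEquiv.ofBijective Φ ⟨hinj, hsurj⟩, fun c => ?_⟩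
  show Φ _ = _
  rw [hΦ, hφ, Ideal.Quotient.lift_mk]
  have hca : (algebraMap k A) c = Polynomial.C c := rfl
  simp [hφ₀, hτ0, hτ1, Prod.ext_iff, hca]
  rfl
end
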